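/- arXiv:2601.14195 — 7 statements merged into one kernel-verified Lean document; each statement's English description precedes it below -/
import Mathlib

section
/- There exists a Stable Roommates instance (a finite set of agents each with a strict preference order over a subset of the other agents, with symmetric acceptability) and two matchings M and M' such that M minimizes the number of blocking agents among all matchings but does not minimize the number of blocking pairs, while M' admits strictly fewer blocking pairs than M. -/
/-- A Stable Roommates (SRI) instance: a set of agents, symmetric irreflexive
acceptability, and for each agent a strict (transitive, total, irreflexive)
preference order over its acceptable partners. -/
structure SRI (A : Type) where
  acc : A → A → Prop
  acc_symm : ∀ a b, acc a b → acc b a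
  acc_irrefl : ∀ a, ¬ acc a a
  /-- `pref a b c` : agent `a` strictly prefers `b` to `c`. -/
  pref : A → A → A → Prop
  pref_acc : ∀ a b c, pref a b c → acc a b ∧ acc a c
  pref_trans : ∀ a b c d, pref a b c → pref a c d → pref a b d
  pref_irrefl : ∀ a b, ¬ pref a b b
  pref_total : ∀ a b c, acc a b → acc a c → b ≠ c → pref a b c ∨ pref a c b

/-- A matching, encoded as an involution: `m a = a` means `a` is unmatched. -/
structure Matching {A : Type} (I : SRI A) where
  m : A → A
  invol : ∀ a, m (m a) = a
  acc_matched : ∀ a, m a ≠ a → I.acc a (m a)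

/-- `{a, b}` is a blocking pair: mutually acceptable, and each is unmatched or
prefers the other to its current partner. -/
def blocks {A : Type} (I : SRI A) (M : Matching I) (a b : A) : Prop :=
  I.acc a b ∧ (M.m a = a ∨ I.pref a b (M.m a)) ∧ (M.m b = b ∨ I.pref b a (M.m b))

/-- Number of blocking pairs containing agent `a`. -/
noncomputable def bpa {A : Type} (I : SRI A) (M : Matching I) (a : A) : ℕ :=
  {b | blocks I M a b}.ncard

/-- Maximum over agents of the number of blocking pairs containing that agent. -/
noncomputable def maxBP {A : Type} (I : SRI A) (M : Matching I) : ℕ :=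
  sSup (Set.range fun a => bpa I M a)

/-- Total number of (unordered) blocking pairs. -/
noncomputable def totalBP {A : Type} (I : SRI A) (M : Matching I) : ℕ :=
  {p : Sym2 A | ∃ a b, p = s(a, b) ∧ blocks I M a b}.ncard

/-- Number of agents contained in at least one blocking pair. -/
noncomputable def blockAgents {A : Type} (I : SRI A) (M : Matching I) : ℕ :=
  {a | ∃ b, blocks I M a b}.ncard

/-- Number of matched agents (twice the number of pairs). -/
noncomputable def msize {A : Type} (I : SRI A) (M : Matching I) : ℕ :=
  {a | M.m a ≠ a}.ncard

/-- `M` is a maximum-cardinality matching. -/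
def MaxCard {A : Type} (I : SRI A) (M : Matching I) : Prop :=
  ∀ M' : Matching I, msize I M' ≤ msize I M

/-- The instance is bipartite with respect to the two sides given by `side`. -/
def Bip {A : Type} (I : SRI A) (side : A → Bool) : Prop :=
  ∀ a b, I.acc a b → side a ≠ side b

/-- `M` is stable: no blocking pair. -/
def Stable {A : Type} (I : SRI A) (M : Matching I) : Prop :=
  ∀ a b, ¬ blocks I M a b

/-! Take two disjoint triangles `0, 1, 2` and `3, 4, 5` with cyclic preferences (each agent ranks
its successor first and its predecessor second), joined by the edge `{0, 3}` that both `0` and `3`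
rank last. In a cyclic triangle at most one edge is matched, and either way some edge of the
triangle blocks, so every matching has at least two blocking agents in each triangle, hence at
least four. Matching `{1, 2}, {4, 5}` attains four blocking agents but has the three blocking pairs
`{0, 2}, {0, 3}, {3, 5}`, whereas `{0, 1}, {3, 4}` has only the two blocking pairs `{1, 2}, {4, 5}`. -/

variable {A : Type}

theorem Matching.m_eq_comm {I : SRI A} (M : Matching I) {a b : A} : M.m a = b ↔ M.m b = a :=
  ⟨fun h => h ▸ M.invol a, fun h => h ▸ M.invol b⟩

def PrefersOverPartner (I : SRI A) (M : Matching I) (a b : A) : Prop :=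
  M.m a = a ∨ I.pref a b (M.m a)

theorem blocks_symm {I : SRI A} {M : Matching I} {a b : A} (h : blocks I M a b) :
    blocks I M b a :=
  ⟨I.acc_symm a b h.1, h.2.2, h.2.1⟩

theorem ne_of_blocks {I : SRI A} {M : Matching I} {a b : A} (h : blocks I M a b) : a ≠ b := by
  rintro rfl
  exact I.acc_irrefl a h.1

namespace SRI

variable (I : SRI A)

def TopTwo (a b c : A) : Prop :=
  I.pref a b c ∧ ∀ w, w ≠ b → w ≠ c → I.acc a w → I.pref a c w

structure IsTopCycle (x y z : A) : Prop where
  top_x : I.TopTwo x y z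
  top_y : I.TopTwo y z x
  top_z : I.TopTwo z x y

variable {I}

namespace TopTwo

variable {a b c : A} (h : I.TopTwo a b c) (M : Matching I)
include h

theorem acc_first : I.acc a b := (I.pref_acc a b c h.1).1

theorem ne_second : b ≠ c := fun hbc => I.pref_irrefl a b (hbc ▸ h.1)

theorem prefersOverPartner_second (hb : M.m a ≠ b) (hc : M.m a ≠ c) :
    PrefersOverPartner I M a c := by
  by_cases ha : M.m a = a
  · exact Or.inl ha
  · exact Or.inr (h.2 _ hb hc (M.acc_matched a ha))

theorem prefersOverPartner_first (hb : M.m a ≠ b) : PrefersOverPartner I M a b := by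
  by_cases hc : M.m a = c
  · exact Or.inr (hc ▸ h.1)
  · rcases h.prefersOverPartner_second M hb hc with ha | hac
    · exact Or.inl ha
    · exact Or.inr (I.pref_trans a b c _ h.1 hac)

end TopTwo

namespace IsTopCycle

variable {x y z : A} (h : I.IsTopCycle x y z) (M : Matching I)
include h

theorem rotate : I.IsTopCycle y z x := ⟨h.top_y, h.top_z, h.top_x⟩

theorem blocks_of_m_eq (hxy : M.m x = y) : blocks I M y z := by
  have hyx : M.m y = x := M.m_eq_comm.mp hxy
  have hyz : M.m y ≠ z := hyx ▸ h.top_y.ne_second.symm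
  refine ⟨h.top_y.acc_first, h.top_y.prefersOverPartner_first M hyz, ?_⟩
  refine h.top_z.prefersOverPartner_second M (fun hzx => ?_) (fun hzy => hyz (M.m_eq_comm.mp hzy))
  exact h.top_x.ne_second (hxy.symm.trans (M.m_eq_comm.mp hzx))

theorem blocks_of_forall_m_ne (hxy : M.m x ≠ y) (hyz : M.m y ≠ z) : blocks I M x y :=
  ⟨h.top_x.acc_first, h.top_x.prefersOverPartner_first M hxy,
    h.top_y.prefersOverPartner_second M hyz (fun hyx => hxy (M.m_eq_comm.mp hyx))⟩

theorem exists_blocks :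
    ∃ a ∈ ({x, y, z} : Set A), ∃ b ∈ ({x, y, z} : Set A), blocks I M a b := by
  by_cases hxy : M.m x = y
  · exact ⟨y, by simp, z, by simp, h.blocks_of_m_eq M hxy⟩
  by_cases hyz : M.m y = z
  · exact ⟨z, by simp, x, by simp, h.rotate.blocks_of_m_eq M hyz⟩
  exact ⟨x, by simp, y, by simp, h.blocks_of_forall_m_ne M hxy hyz⟩

theorem two_le_ncard_inter_blocking :
    2 ≤ (({x, y, z} : Set A) ∩ {a | ∃ b, blocks I M a b}).ncard := by
  obtain ⟨a, ha, b, hb, hab⟩ := h.exists_blocks M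
  rw [← Set.ncard_pair (ne_of_blocks hab)]
  refine Set.ncard_le_ncard ?_ ((Set.toFinite {x, y, z}).inter_of_left _)
  rintro c (rfl | rfl)
  exacts [⟨ha, b, hab⟩, ⟨hb, a, blocks_symm hab⟩]

end IsTopCycle

theorem four_le_blockAgents_of_isTopCycle [Finite A] {x y z x' y' z' : A}
    (h : I.IsTopCycle x y z) (h' : I.IsTopCycle x' y' z')
    (hdisj : Disjoint ({x, y, z} : Set A) {x', y', z'}) (M : Matching I) :
    4 ≤ blockAgents I M := by
  set B := {a | ∃ b, blocks I M a b}
  calc 4 ≤ (({x, y, z} : Set A) ∩ B).ncard + (({x', y', z'} : Set A) ∩ B).ncard := by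
        linarith [h.two_le_ncard_inter_blocking M, h'.two_le_ncard_inter_blocking M]
    _ = ((({x, y, z} : Set A) ∩ B) ∪ ({x', y', z'} ∩ B)).ncard :=
        (Set.ncard_union_eq (hdisj.mono Set.inter_subset_left Set.inter_subset_left)).symm
    _ ≤ B.ncard := Set.ncard_le_ncard (Set.union_subset Set.inter_subset_right Set.inter_subset_right)

end SRI

def SRI.ofPrefLists [DecidableEq A] (L : A → List A) (symm : ∀ a b, b ∈ L a → a ∈ L b)
    (irrefl : ∀ a, a ∉ L a) : SRI A where
  acc a b := b ∈ L a
  acc_symm := symm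
  acc_irrefl := irrefl
  pref a b c := b ∈ L a ∧ c ∈ L a ∧ (L a).idxOf b < (L a).idxOf c
  pref_acc _ _ _ h := ⟨h.1, h.2.1⟩
  pref_trans _ _ _ _ h h' := ⟨h.1, h'.2.1, h.2.2.trans h'.2.2⟩
  pref_irrefl _ _ h := lt_irrefl _ h.2.2
  pref_total a b c hb hc hbc := by
    rcases Nat.lt_or_gt_of_ne (mt (List.idxOf_inj hb).mp hbc) with h | h
    exacts [Or.inl ⟨hb, hc, h⟩, Or.inr ⟨hc, hb, h⟩]

namespace TwoTriangles

def I : SRI (Fin 6) :=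
  .ofPrefLists ![[1, 2, 3], [2, 0], [0, 1], [4, 5, 0], [5, 3], [3, 4]] (by decide) (by decide)

instance (a b : Fin 6) : Decidable (I.acc a b) := inferInstanceAs (Decidable (b ∈ _))
instance (a b c : Fin 6) : Decidable (I.pref a b c) := inferInstanceAs (Decidable (_ ∧ _ ∧ _))
instance (N : Matching I) (a b : Fin 6) : Decidable (blocks I N a b) :=
  inferInstanceAs (Decidable (_ ∧ _ ∧ _))
instance (a b c : Fin 6) : Decidable (I.TopTwo a b c) := inferInstanceAs (Decidable (_ ∧ _))

def M : Matching I where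
  m := Equiv.swap 1 2 ∘ Equiv.swap 4 5
  invol := by decide
  acc_matched := by decide

def M' : Matching I where
  m := Equiv.swap 0 1 ∘ Equiv.swap 3 4
  invol := by decide
  acc_matched := by decide

theorem isTopCycle_012 : I.IsTopCycle 0 1 2 := ⟨by decide, by decide, by decide⟩

theorem isTopCycle_345 : I.IsTopCycle 3 4 5 := ⟨by decide, by decide, by decide⟩

theorem blockAgents_M : blockAgents I M = 4 := by
  rw [blockAgents, Set.ncard_eq_toFinset_card', Set.toFinset_ofPred]
  decide

theorem totalBP_M : totalBP I M = 3 := by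
  rw [totalBP, Set.ncard_eq_toFinset_card', Set.toFinset_ofPred]
  decide

theorem totalBP_M' : totalBP I M' = 2 := by
  rw [totalBP, Set.ncard_eq_toFinset_card', Set.toFinset_ofPred]
  decide

end TwoTriangles

/-- There is an SRI instance and matchings M, M' such that M minimizes the number
of blocking agents among all matchings, but does not minimize the number of
blocking pairs; indeed M' admits strictly fewer blocking pairs than M. -/
theorem stmt0 :
    ∃ (A : Type) (_ : Fintype A) (I : SRI A) (M M' : Matching I),
      (∀ M'' : Matching I, blockAgents I M ≤ blockAgents I M'') ∧
      ¬ (∀ M'' : Matching I, totalBP I M ≤ totalBP I M'') ∧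
      totalBP I M' < totalBP I M := by
  open TwoTriangles in
  have hfewer : totalBP I M' < totalBP I M := by rw [totalBP_M, totalBP_M']; decide
  refine ⟨Fin 6, inferInstance, I, M, M', fun M'' => ?_, fun h => (h M').not_gt hfewer, hfewer⟩
  rw [blockAgents_M]
  exact SRI.four_le_blockAgents_of_isTopCycle isTopCycle_012 isTopCycle_345 (by simp) M''
end

section
/- There exists a Stable Roommates instance and a matching M such that M minimizes over all matchings the maximum number of blocking pairs that any single agent is contained in, yet M does not minimize the total number of blocking pairs. -/
/-!
Three agents with cyclic preferences (`0` prefers `1`, `1` prefers `2`, `2` prefers `0`) admit no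
stable matching, so every matching has an agent in a blocking pair and `maxBP ≥ 1`. Add two agents
`3, 4` that accept only each other. Matching just `{0, 1}` leaves the blocking pairs `{1, 2}` and
`{3, 4}`, which are disjoint, so `maxBP = 1` is optimal; but adding the pair `{3, 4}` removes one
blocking pair without creating any, so the total of two is not.
-/

namespace SRI

variable {A : Type} (I : SRI A)

def OnlyAccepts (a b c : A) : Prop :=
  (∀ x, I.acc a x → x = b ∨ x = c) ∧ I.pref a b c

variable {I}

lemma ne_of_pref {a b c : A} (h : I.pref a b c) : b ≠ c := by
  rintro rfl
  exact I.pref_irrefl a b h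

lemma ne_of_acc {a b : A} (h : I.acc a b) : a ≠ b := by
  rintro rfl
  exact I.acc_irrefl a h

end SRI

namespace Matching

variable {A : Type} {I : SRI A} (M : Matching I)

lemma m_eq_of_m_eq {a b : A} (h : M.m a = b) : M.m b = a := by
  rw [← h, M.invol]

lemma m_eq_self_or_of_onlyAccepts {a b c : A} (h : I.OnlyAccepts a b c) :
    M.m a = a ∨ M.m a = b ∨ M.m a = c := by
  by_cases ha : M.m a = a
  · exact Or.inl ha
  · exact Or.inr (h.1 _ (M.acc_matched a ha))

end Matching

section Triangle

variable {A : Type} {I : SRI A} {a b c : A}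

lemma not_stable_of_unmatched (hb : I.OnlyAccepts b c a) (hc : I.OnlyAccepts c a b)
    (M : Matching I) (ha : M.m a = a) : ¬ Stable I M := by
  intro hM
  rcases M.m_eq_self_or_of_onlyAccepts hb with hbb | hbc | hba
  · exact hM a b ⟨I.acc_symm _ _ (I.pref_acc b c a hb.2).2, Or.inl ha, Or.inl hbb⟩
  · have hcb : M.m c = b := M.m_eq_of_m_eq hbc
    exact hM c a ⟨(I.pref_acc c a b hc.2).1, Or.inr (hcb ▸ hc.2), Or.inl ha⟩
  · have hab : M.m a = b := M.m_eq_of_m_eq hba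
    exact SRI.ne_of_acc (I.pref_acc b c a hb.2).2 (hab.symm.trans ha)

/-- Each agent of the triangle can only be matched inside it, and it has an odd number of agents. -/
lemma exists_unmatched_of_triangle (ha : I.OnlyAccepts a b c) (hb : I.OnlyAccepts b c a)
    (hc : I.OnlyAccepts c a b) (M : Matching I) : M.m a = a ∨ M.m b = b ∨ M.m c = c := by
  have hab : a ≠ b := SRI.ne_of_pref hc.2
  have hbc : b ≠ c := SRI.ne_of_pref ha.2
  have hca : c ≠ a := SRI.ne_of_pref hb.2
  have ma := M.m_eq_self_or_of_onlyAccepts ha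
  have mb := M.m_eq_self_or_of_onlyAccepts hb
  have mc := M.m_eq_self_or_of_onlyAccepts hc
  have := M.invol a
  have := M.invol b
  have := M.invol c
  grind

lemma not_stable_of_triangle (ha : I.OnlyAccepts a b c) (hb : I.OnlyAccepts b c a)
    (hc : I.OnlyAccepts c a b) (M : Matching I) : ¬ Stable I M := by
  rcases exists_unmatched_of_triangle ha hb hc M with h | h | h
  · exact not_stable_of_unmatched hb hc M h
  · exact not_stable_of_unmatched hc ha M h
  · exact not_stable_of_unmatched ha hb M h

end Triangle

section Counting

variable {A : Type} {I : SRI A} {M : Matching I}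

lemma bpa_le_maxBP [Finite A] (a : A) : bpa I M a ≤ maxBP I M :=
  le_csSup (Set.finite_range _).bddAbove (Set.mem_range_self a)

lemma one_le_maxBP_of_not_stable [Finite A] (h : ¬ Stable I M) : 1 ≤ maxBP I M := by
  obtain ⟨a, b, hab⟩ : ∃ a b, blocks I M a b := by simpa [Stable] using h
  calc 1 ≤ bpa I M a := (Set.ncard_pos).mpr ⟨b, hab⟩
    _ ≤ maxBP I M := bpa_le_maxBP a

lemma maxBP_le_one [Finite A] (h : ∀ a b c, blocks I M a b → blocks I M a c → b = c) :
    maxBP I M ≤ 1 := by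
  refine csSup_le' ?_
  rintro _ ⟨a, rfl⟩
  exact (Set.ncard_le_one_iff).mpr fun hb hc => h a _ _ hb hc

lemma totalBP_le_one [Finite A] {p : Sym2 A} (h : ∀ a b, blocks I M a b → s(a, b) = p) :
    totalBP I M ≤ 1 := by
  refine (Set.ncard_le_one_iff).mpr ?_
  rintro _ _ ⟨a, b, rfl, hab⟩ ⟨c, d, rfl, hcd⟩
  rw [h a b hab, h c d hcd]

lemma two_le_totalBP [Finite A] {a b c d : A} (hab : blocks I M a b) (hcd : blocks I M c d)
    (hne : s(a, b) ≠ s(c, d)) : 2 ≤ totalBP I M := by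
  rw [← Set.ncard_pair hne]
  exact Set.ncard_le_ncard (by rintro _ (rfl | rfl) <;> exact ⟨_, _, rfl, ‹_›⟩)

end Counting

instance {A : Type} [DecidableEq A] {I : SRI A} [∀ a b, Decidable (I.acc a b)]
    [∀ a b c, Decidable (I.pref a b c)] (M : Matching I) (a b : A) :
    Decidable (blocks I M a b) :=
  inferInstanceAs (Decidable (_ ∧ _ ∧ _))

/-- `prefRank a b` is the position of `b` in the preference list of `a`; `9` marks `b` as
unacceptable to `a`. -/
abbrev prefRank : Fin 5 → Fin 5 → ℕ :=
  ![![9, 0, 1, 9, 9], ![1, 9, 0, 9, 9], ![0, 1, 9, 9, 9], ![9, 9, 9, 9, 0], ![9, 9, 9, 0, 9]]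

def triangleWithPair : SRI (Fin 5) where
  acc a b := prefRank a b ≠ 9
  acc_symm := by decide
  acc_irrefl := by decide
  pref a b c := prefRank a b ≠ 9 ∧ prefRank a c ≠ 9 ∧ prefRank a b < prefRank a c
  pref_acc := by decide
  pref_trans := by decide
  pref_irrefl := by decide
  pref_total := by decide

instance (a b : Fin 5) : Decidable (triangleWithPair.acc a b) :=
  inferInstanceAs (Decidable (prefRank a b ≠ 9))

instance (a b c : Fin 5) : Decidable (triangleWithPair.pref a b c) :=
  inferInstanceAs
    (Decidable (prefRank a b ≠ 9 ∧ prefRank a c ≠ 9 ∧ prefRank a b < prefRank a c))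

def matching01 : Matching triangleWithPair where
  m := ![1, 0, 2, 3, 4]
  invol := by decide
  acc_matched := by decide

def matching01_34 : Matching triangleWithPair where
  m := ![1, 0, 2, 4, 3]
  invol := by decide
  acc_matched := by decide

lemma not_stable_triangleWithPair (M : Matching triangleWithPair) :
    ¬ Stable triangleWithPair M :=
  not_stable_of_triangle (a := 0) (b := 1) (c := 2)
    ⟨by decide, by decide⟩ ⟨by decide, by decide⟩ ⟨by decide, by decide⟩ M

lemma maxBP_matching01_le_one : maxBP triangleWithPair matching01 ≤ 1 :=
  maxBP_le_one (by decide)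

lemma two_le_totalBP_matching01 : 2 ≤ totalBP triangleWithPair matching01 :=
  two_le_totalBP (a := 1) (b := 2) (c := 3) (d := 4) (by decide) (by decide) (by decide)

lemma totalBP_matching01_34_le_one : totalBP triangleWithPair matching01_34 ≤ 1 :=
  totalBP_le_one (p := s(1, 2)) (by decide)

/-- There is an SRI instance and a matching M that minimizes, over all matchings,
the maximum number of blocking pairs any single agent is in, yet M does not
minimize the total number of blocking pairs. -/
theorem stmt1 :
    ∃ (A : Type) (_ : Fintype A) (I : SRI A) (M : Matching I),
      (∀ M' : Matching I, maxBP I M ≤ maxBP I M') ∧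
      ¬ (∀ M' : Matching I, totalBP I M ≤ totalBP I M') := by
  refine ⟨Fin 5, inferInstance, triangleWithPair, matching01, fun M' => ?_, fun h => ?_⟩
  · exact maxBP_matching01_le_one.trans
      (one_le_maxBP_of_not_stable (not_stable_triangleWithPair M'))
  · exact absurd ((two_le_totalBP_matching01.trans (h matching01_34)).trans
      totalBP_matching01_34_le_one) (by decide)
end

section
/- There exists a Stable Roommates instance and matchings M, M' such that M minimizes the number of blocking agents but some agent of M is in two blocking pairs, while M' has the property that no agent is in more than one blocking pair; hence a matching minimizing the number of blocking agents need not attain the minimax number of blocking pairs per agent. -/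
/-!
Take five agents with preference lists
`0 : 1 3 2 4`, `1 : 3 2 4 0`, `2 : 1 3 4 0`, `3 : 2 1 4 0`, `4 : 0 3 1 2`.
Agents `1, 2, 3` rank one another above `0` and `4`, and their first choices form the cycle
`1 → 3 → 2 → 1`. So if two of them are matched together, the third blocks with whichever of
the two ranks it first, and if no two of them are, all three pairs among them block. In the
first case the partners of `0` and `4` always produce one more blocking agent, so every
matching has at least three blocking agents. The matching `{01, 34}` has exactly three, with
blocking pairs `12, 13, 23`, while `{12, 34}` has only the disjoint blocking pairs `04, 13`.
-/

open Finset

section Counting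

variable {A : Type} [Fintype A] (I : SRI A) (M : Matching I)

theorem bpa_eq_card (a : A) [DecidablePred (blocks I M a)] :
    bpa I M a = #{b | blocks I M a b} := by
  rw [bpa, Set.ncard_eq_toFinset_card', Set.toFinset_ofPred]

theorem blockAgents_eq_card [DecidablePred fun a => ∃ b, blocks I M a b] :
    blockAgents I M = #{a | ∃ b, blocks I M a b} := by
  rw [blockAgents, Set.ncard_eq_toFinset_card', Set.toFinset_ofPred]

end Counting

instance {A : Type} [DecidableEq A] (I : SRI A) [DecidableRel I.acc]
    [∀ a, DecidableRel (I.pref a)] (M : Matching I) : DecidableRel (blocks I M) := fun _ _ =>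
  inferInstanceAs (Decidable (_ ∧ _ ∧ _))

namespace SRI

variable {A : Type}

def complete (rank : A → A → ℕ) (hrank : ∀ a, Function.Injective (rank a)) : SRI A where
  acc a b := a ≠ b
  acc_symm _ _ := Ne.symm
  acc_irrefl _ h := h rfl
  pref a b c := a ≠ b ∧ a ≠ c ∧ rank a b < rank a c
  pref_acc _ _ _ h := ⟨h.1, h.2.1⟩
  pref_trans _ _ _ _ h₁ h₂ := ⟨h₁.1, h₂.2.1, h₁.2.2.trans h₂.2.2⟩
  pref_irrefl _ _ h := lt_irrefl _ h.2.2
  pref_total a _ _ hb hc hbc :=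
    (lt_or_gt_of_ne ((hrank a).ne hbc)).imp (⟨hb, hc, ·⟩) (⟨hc, hb, ·⟩)

variable [DecidableEq A] {rank : A → A → ℕ} {hrank : ∀ a, Function.Injective (rank a)}

instance : DecidableRel (complete rank hrank).acc := fun a b =>
  inferInstanceAs (Decidable (a ≠ b))

instance (a : A) : DecidableRel ((complete rank hrank).pref a) := fun b c =>
  inferInstanceAs (Decidable (a ≠ b ∧ a ≠ c ∧ rank a b < rank a c))

end SRI

def Matching.ofInvolutive {A : Type} {rank : A → A → ℕ} {hrank : ∀ a, Function.Injective (rank a)}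
    (f : A → A) (hf : Function.Involutive f) : Matching (SRI.complete rank hrank) where
  m := f
  invol := hf
  acc_matched _ h := h.symm

namespace BlockingAgentsExample

def prefs : Fin 5 → List (Fin 5) :=
  ![[1, 3, 2, 4], [3, 2, 4, 0], [1, 3, 4, 0], [2, 1, 4, 0], [0, 3, 1, 2]]

def rank (a b : Fin 5) : ℕ := (prefs a).idxOf b

theorem rank_injective (a : Fin 5) : Function.Injective (rank a) := by
  revert a; decide

abbrev I : SRI (Fin 5) := SRI.complete rank rank_injective

def M : Matching I := .ofInvolutive ![1, 0, 2, 4, 3] (by unfold Function.Involutive; decide)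

def M' : Matching I := .ofInvolutive ![0, 2, 1, 4, 3] (by unfold Function.Involutive; decide)

theorem three_le_blockAgents (N : Matching I) : 3 ≤ blockAgents I N := by
  have h_all : ∀ f : Fin 5 → Fin 5, ∀ hf : ∀ x, f (f x) = x,
      3 ≤ #{a | ∃ b, blocks I (.ofInvolutive f hf) a b} := by
    -- five quantifiers over `Fin 5` are far cheaper for the kernel than one over `Fin 5 → Fin 5`
    rw [← FinVec.forall_iff]
    simp only [FinVec.Forall]
    decide
  obtain ⟨f, hf, rfl⟩ : ∃ f hf, Matching.ofInvolutive f hf = N := ⟨N.m, N.invol, rfl⟩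
  rw [blockAgents_eq_card]
  exact h_all f hf

theorem blockAgents_M : blockAgents I M = 3 := by
  rw [blockAgents_eq_card]
  decide

theorem two_le_bpa_M_one : 2 ≤ bpa I M 1 := by
  rw [bpa_eq_card]
  decide

theorem bpa_M'_le_one (a : Fin 5) : bpa I M' a ≤ 1 := by
  rw [bpa_eq_card]
  revert a
  decide

end BlockingAgentsExample

/-- There is an SRI instance with matchings M, M' such that M minimizes the number
of blocking agents but has an agent in two blocking pairs, while in M' no agent is
in more than one blocking pair. -/
theorem stmt2 :
    ∃ (A : Type) (_ : Fintype A) (I : SRI A) (M M' : Matching I),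
      (∀ M'' : Matching I, blockAgents I M ≤ blockAgents I M'') ∧
      (∃ a, 2 ≤ bpa I M a) ∧
      (∀ a, bpa I M' a ≤ 1) :=
  open BlockingAgentsExample in
  ⟨Fin 5, inferInstance, I, M, M',
    fun N => blockAgents_M.trans_le (three_le_blockAgents N), ⟨1, two_le_bpa_M_one⟩, bpa_M'_le_one⟩
end

section
/- For SMI instances, the optimal value OPT of the problem of minimizing, over maximum-cardinality matchings, the maximum number of blocking pairs any agent is contained in, satisfies OPT ≤ n − 1 where n is the number of agents, and there is an infinite family of instances with n = 2(OPT + 1); hence OPT = Θ(n) in the worst case. -/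
/-!
The upper bound is a counting fact: an agent blocks only with agents other than itself, so in
any matching, in particular a maximum-cardinality one, it lies in at most `n - 1` blocking pairs.

For the lower bound take men `m₀, …, mₖ` and women `w₀, …, wₖ`, where `mᵢ` accepts `wᵢ` and `w₀`
and prefers `w₀`, while `w₀` ranks `m₁ > ⋯ > mₖ > m₀`. The matching `{mᵢ wᵢ}` is the unique
perfect matching, since `m₀` and every `wᵢ` with `i ≥ 1` have a single acceptable partner; in
it `w₀` holds her worst man, so she blocks with each of `m₁, …, mₖ`, and nobody else blocks
with more than `w₀`. Here `n = 2(k + 1)`.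
-/

theorem Matching.ext {A : Type} {I : SRI A} {M N : Matching I} (h : ∀ a, M.m a = N.m a) :
    M = N := by
  cases M; cases N; congr; funext a; exact h a

section Counting

variable {A : Type} {I : SRI A}

theorem maxBP_le_of_forall_bpa_le {M : Matching I} {k : ℕ} (h : ∀ a, bpa I M a ≤ k) :
    maxBP I M ≤ k :=
  csSup_le' (by rintro _ ⟨a, rfl⟩; exact h a)

theorem maxBP_eq_of_forall_bpa_le {M : Matching I} {k : ℕ} (h : ∀ a, bpa I M a ≤ k)
    {a₀ : A} (ha₀ : bpa I M a₀ = k) : maxBP I M = k :=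
  (maxBP_le_of_forall_bpa_le h).antisymm
    (le_csSup ⟨k, by rintro _ ⟨a, rfl⟩; exact h a⟩ ⟨a₀, ha₀⟩)

variable [Fintype A]

theorem msize_le_card (M : Matching I) : msize I M ≤ Fintype.card A := by
  simpa [msize, Nat.card_eq_fintype_card] using
    Set.ncard_le_ncard (Set.subset_univ {a | M.m a ≠ a})

theorem msize_eq_card_iff (M : Matching I) :
    msize I M = Fintype.card A ↔ ∀ a, M.m a ≠ a := by
  rw [msize, ← Nat.card_eq_fintype_card]
  constructor
  · intro h a ha
    have hne : {a | M.m a ≠ a} ≠ Set.univ := fun hu => Set.eq_univ_iff_forall.1 hu a ha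
    exact (Set.ncard_lt_card hne).ne h
  · intro h
    have hall : {a | M.m a ≠ a} = Set.univ := Set.eq_univ_of_forall h
    rw [hall, Set.ncard_univ]

theorem maxCard_of_forall_matched {M : Matching I} (h : ∀ a, M.m a ≠ a) : MaxCard I M := by
  intro M'
  rw [(msize_eq_card_iff M).2 h]
  exact msize_le_card M'

theorem forall_matched_of_maxCard {M P : Matching I} (hM : MaxCard I M)
    (hP : ∀ a, P.m a ≠ a) : ∀ a, M.m a ≠ a :=
  (msize_eq_card_iff M).1 <|
    (msize_le_card M).antisymm ((msize_eq_card_iff P).2 hP ▸ hM P)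

variable (I) in
theorem exists_maxCard : ∃ M : Matching I, MaxCard I M := by
  let S := Set.range (msize I)
  have hne : S.Nonempty := ⟨_, ⟨⟨id, fun _ => rfl, fun a h => absurd rfl h⟩, rfl⟩⟩
  have hbdd : BddAbove S := ⟨Fintype.card A, by rintro _ ⟨M, rfl⟩; exact msize_le_card M⟩
  obtain ⟨M, hM⟩ := Nat.sSup_mem hne hbdd
  exact ⟨M, fun M' => hM ▸ le_csSup hbdd ⟨M', rfl⟩⟩

theorem bpa_le_card_sub_one (M : Matching I) (a : A) : bpa I M a ≤ Fintype.card A - 1 := by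
  have hsub : {b | blocks I M a b} ⊆ {a}ᶜ := by
    rintro b hb rfl
    exact I.acc_irrefl _ hb.1
  calc bpa I M a ≤ ({a}ᶜ : Set A).ncard := Set.ncard_le_ncard hsub
    _ = Fintype.card A - 1 := by
      rw [Set.ncard_compl, Set.ncard_singleton, Nat.card_eq_fintype_card]

theorem maxBP_le_card_sub_one (M : Matching I) : maxBP I M ≤ Fintype.card A - 1 :=
  maxBP_le_of_forall_bpa_le (bpa_le_card_sub_one M)

end Counting

namespace LowerBound

variable (k : ℕ)

/- Agent `i ≤ k` is the man `mᵢ`, agent `k + 1 + i` is the woman `wᵢ`; so `w₀` is agent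
`k + 1`. -/
def acc (a b : Fin (2 * (k + 1))) : Prop :=
  (a.val < k + 1 ∧ (b.val = (k + 1) + a.val ∨ b.val = k + 1)) ∨
  (b.val < k + 1 ∧ (a.val = (k + 1) + b.val ∨ a.val = k + 1))

/- Smaller is better. Every agent ranks by index, except that `w₀` moves `m₀` to the end. -/
def rank (a b : Fin (2 * (k + 1))) : ℕ :=
  if a.val = k + 1 then (if b.val = 0 then k + 1 else b.val) else b.val

def pref (a b c : Fin (2 * (k + 1))) : Prop :=
  acc k a b ∧ acc k a c ∧ rank k a b < rank k a c

def inst : SRI (Fin (2 * (k + 1))) where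
  acc := acc k
  acc_symm _ _ h := by unfold acc at *; tauto
  acc_irrefl _ h := by unfold acc at h; omega
  pref := pref k
  pref_acc _ _ _ h := ⟨h.1, h.2.1⟩
  pref_trans _ _ _ _ h₁ h₂ := ⟨h₁.1, h₂.2.1, h₁.2.2.trans h₂.2.2⟩
  pref_irrefl _ _ h := lt_irrefl _ h.2.2
  pref_total a b c hab hac hbc := by
    have hrank : rank k a b ≠ rank k a c := by
      have : b.val ≠ c.val := Fin.val_ne_of_ne hbc
      unfold acc at hab hac
      unfold rank
      split_ifs <;> omega
    rcases hrank.lt_or_gt with h | h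
    · exact Or.inl ⟨hab, hac, h⟩
    · exact Or.inr ⟨hac, hab, h⟩

def side (a : Fin (2 * (k + 1))) : Bool := decide (a.val < k + 1)

theorem bip : Bip (inst k) (side k) := by
  intro a b (hab : acc k a b)
  unfold acc at hab
  simp only [side, ne_eq, decide_eq_decide]
  omega

def partner (a : Fin (2 * (k + 1))) : Fin (2 * (k + 1)) :=
  if h : a.val < k + 1 then ⟨a.val + (k + 1), by omega⟩
  else ⟨a.val - (k + 1), by omega⟩

theorem partner_val (a : Fin (2 * (k + 1))) :
    (partner k a).val = if a.val < k + 1 then a.val + (k + 1) else a.val - (k + 1) := by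
  unfold partner; split <;> rfl

def perfect : Matching (inst k) where
  m := partner k
  invol a := by
    apply Fin.ext
    rw [partner_val, partner_val]
    split_ifs <;> omega
  acc_matched a _ := by
    show acc k a (partner k a)
    unfold acc
    rw [partner_val]
    split_ifs <;> omega

theorem perfect_matched (a : Fin (2 * (k + 1))) : (perfect k).m a ≠ a := by
  intro h
  have h := congrArg Fin.val h
  rw [perfect, partner_val] at h
  split_ifs at h <;> omega

theorem maxCard_perfect : MaxCard (inst k) (perfect k) :=
  maxCard_of_forall_matched (perfect_matched k)

theorem eq_perfect_of_forall_matched (M : Matching (inst k)) (hM : ∀ a, M.m a ≠ a) :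
    M = perfect k := by
  have forced : ∀ a : Fin (2 * (k + 1)), a.val = 0 ∨ k + 1 < a.val → M.m a = partner k a := by
    intro a ha
    have hacc : acc k a (M.m a) := M.acc_matched a (hM a)
    apply Fin.ext
    rw [partner_val]
    unfold acc at hacc
    split_ifs <;> omega
  refine Matching.ext fun a => ?_
  by_cases ha : a.val = 0 ∨ k + 1 < a.val
  · exact forced a ha
  · have hb : (partner k a).val = 0 ∨ k + 1 < (partner k a).val := by
      rw [partner_val]
      split_ifs <;> omega
    have hback : M.m (partner k a) = a := (forced _ hb).trans ((perfect k).invol a)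
    calc M.m a = M.m (M.m (partner k a)) := by rw [hback]
      _ = partner k a := M.invol _

theorem blocks_perfect_iff (a b : Fin (2 * (k + 1))) :
    blocks (inst k) (perfect k) a b ↔
      (1 ≤ a.val ∧ a.val < k + 1 ∧ b.val = k + 1) ∨
      (1 ≤ b.val ∧ b.val < k + 1 ∧ a.val = k + 1) := by
  show (acc k a b ∧ (partner k a = a ∨ pref k a b (partner k a)) ∧
    (partner k b = b ∨ pref k b a (partner k b))) ↔ _
  simp only [pref, acc, rank, Fin.ext_iff, partner_val]
  split_ifs <;> omega

def hub : Fin (2 * (k + 1)) := ⟨k + 1, by omega⟩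

theorem bpa_perfect_hub : bpa (inst k) (perfect k) (hub k) = k := by
  have hbound : ∀ m ∈ Finset.Ico 1 (k + 1), m < 2 * (k + 1) := by
    intro m hm
    rw [Finset.mem_Ico] at hm
    omega
  have hset : {b | blocks (inst k) (perfect k) (hub k) b} =
      ↑((Finset.Ico 1 (k + 1)).attachFin hbound) := by
    ext b
    simp only [Set.mem_ofPred_eq, blocks_perfect_iff, hub, Finset.mem_coe,
      Finset.mem_attachFin, Finset.mem_Ico, and_true]
    omega
  rw [bpa, hset, Set.ncard_coe_finset, Finset.card_attachFin, Nat.card_Ico,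
    Nat.add_sub_cancel]

theorem bpa_perfect_le (a : Fin (2 * (k + 1))) : bpa (inst k) (perfect k) a ≤ k := by
  by_cases ha : a = hub k
  · exact ha ▸ (bpa_perfect_hub k).le
  · rcases Set.eq_empty_or_nonempty {b | blocks (inst k) (perfect k) a b} with h | ⟨b, hb⟩
    · simp [bpa, h]
    · have hk : 1 ≤ k := by
        have := (blocks_perfect_iff k a b).1 hb
        omega
      have hsub : {b | blocks (inst k) (perfect k) a b} ⊆ {hub k} := by
        intro c hc
        have := (blocks_perfect_iff k a c).1 hc
        have : a.val ≠ k + 1 := fun h => ha (Fin.ext h)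
        simp only [Set.mem_singleton_iff, hub, Fin.ext_iff]
        omega
      calc bpa (inst k) (perfect k) a ≤ ({hub k} : Set _).ncard := Set.ncard_le_ncard hsub
        _ = 1 := Set.ncard_singleton _
        _ ≤ k := hk

theorem maxBP_perfect : maxBP (inst k) (perfect k) = k :=
  maxBP_eq_of_forall_bpa_le (bpa_perfect_le k) (bpa_perfect_hub k)

end LowerBound

open LowerBound in
/-- For SMI instances, the optimum of minimizing over maximum-cardinality
matchings the maximum number of blocking pairs per agent is at most n - 1, and
there is an infinite family of instances attaining n = 2(OPT + 1); hence
OPT = Θ(n) in the worst case. -/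
theorem stmt7 :
    (∀ (A : Type) [Fintype A] (I : SRI A) (side : A → Bool), Bip I side →
      ∃ M : Matching I, MaxCard I M ∧ maxBP I M ≤ Fintype.card A - 1) ∧
    (∀ k : ℕ, ∃ (I : SRI (Fin (2 * (k + 1)))) (side : Fin (2 * (k + 1)) → Bool),
      Bip I side ∧
      (∀ M : Matching I, MaxCard I M → k ≤ maxBP I M) ∧
      (∃ M : Matching I, MaxCard I M ∧ maxBP I M = k)) := by
  refine ⟨fun A _ I _ _ => ?_, fun k => ⟨inst k, side k, bip k, fun M hM => ?_,
    perfect k, maxCard_perfect k, maxBP_perfect k⟩⟩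
  · obtain ⟨M, hM⟩ := exists_maxCard I
    exact ⟨M, hM, maxBP_le_card_sub_one M⟩
  · have hperf : M = perfect k :=
      eq_perfect_of_forall_matched k M (forall_matched_of_maxCard hM (perfect_matched k))
    rw [hperf, maxBP_perfect]
end

section
/- Let M be a maximum-cardinality matching in a graph of maximum degree at most 2, and suppose vertex v is unmatched and has two neighbors u, w. Then both u and w are matched in M; moreover, if u's other neighbor (besides v) exists, that neighbor is also matched in M. -/
/-!
If two adjacent vertices were both unmatched, adding the edge between them would enlarge the
matching; hence the neighbours `u`, `w` of the unmatched vertex `v` are matched. The partner of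
`u` differs from `v` and from any unmatched neighbour `x ≠ v` of `u`, so an unmatched such `x`
would give `u` three distinct neighbours, against the degree bound.
-/

/-- A matching in a graph, encoded as an involution: `m v = v` means unmatched. -/
structure GMatching {V : Type} (G : SimpleGraph V) where
  m : V → V
  invol : ∀ v, m (m v) = v
  adj_matched : ∀ v, m v ≠ v → G.Adj v (m v)

/-- Number of matched vertices. -/
noncomputable def gsize {V : Type} {G : SimpleGraph V} (M : GMatching G) : ℕ :=
  {v | M.m v ≠ v}.ncard

namespace GMatching

variable {V : Type} {G : SimpleGraph V} (M : GMatching G)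

def IsMaximum : Prop := ∀ M' : GMatching G, gsize M' ≤ gsize M

theorem m_injective : Function.Injective M.m :=
  Function.LeftInverse.injective M.invol

variable {M}

theorem m_eq_iff_of_m_eq_self {v y : V} (hv : M.m v = v) : M.m y = v ↔ y = v :=
  M.m_injective.eq_iff' hv

open Classical in
noncomputable def addEdge {v u : V} (hv : M.m v = v) (hu : M.m u = u) (hadj : G.Adj v u) :
    GMatching G where
  m y := if y = v then u else if y = u then v else M.m y
  invol y := by
    by_cases hyv : y = v
    · simp [hyv, hadj.ne.symm]
    by_cases hyu : y = u
    · simp [hyu]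
    simp [hyv, hyu, m_eq_iff_of_m_eq_self hv, m_eq_iff_of_m_eq_self hu, M.invol]
  adj_matched y hy := by
    by_cases hyv : y = v
    · simpa [hyv] using hadj
    by_cases hyu : y = u
    · simpa [hyu, hadj.ne.symm] using hadj.symm
    simp only [hyv, hyu, if_false] at hy ⊢
    exact M.adj_matched y hy

theorem gsize_addEdge [Finite V] {v u : V} (hv : M.m v = v) (hu : M.m u = u)
    (hadj : G.Adj v u) : gsize (M.addEdge hv hu hadj) = gsize M + 2 := by
  have hmatched :
      {y | (M.addEdge hv hu hadj).m y ≠ y} = insert v (insert u {y | M.m y ≠ y}) := by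
    ext y
    by_cases hyv : y = v
    · simp [addEdge, hyv, hadj.ne.symm]
    by_cases hyu : y = u
    · simp [addEdge, hyu, hadj.ne, hadj.ne.symm]
    simp [addEdge, hyv, hyu]
  rw [gsize, gsize, hmatched, Set.ncard_insert_of_notMem (by simp [hadj.ne, hv]),
    Set.ncard_insert_of_notMem (by simp [hu])]

theorem IsMaximum.m_ne_self_of_adj [Finite V] (hM : M.IsMaximum) {v u : V} (hv : M.m v = v)
    (hadj : G.Adj v u) : M.m u ≠ u := by
  intro hu
  have := hM (M.addEdge hv hu hadj)
  rw [gsize_addEdge] at this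
  omega

theorem eq_of_adj_of_adj_of_m_eq_self [Finite V] {u v x : V} (hdeg : {y | G.Adj u y}.ncard ≤ 2)
    (hu : M.m u ≠ u) (hv : M.m v = v) (hx : M.m x = x) (huv : G.Adj u v) (hux : G.Adj u x) :
    v = x := by
  by_contra hvx
  have hpv : M.m u ≠ v := fun h => huv.ne ((m_eq_iff_of_m_eq_self hv).mp h)
  have hpx : M.m u ≠ x := fun h => hux.ne ((m_eq_iff_of_m_eq_self hx).mp h)
  have hsub : ({v, x, M.m u} : Set V) ⊆ {y | G.Adj u y} := by
    rintro y (rfl | rfl | rfl)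
    exacts [huv, hux, M.adj_matched u hu]
  have hthree : ({v, x, M.m u} : Set V).ncard = 3 :=
    Set.ncard_eq_three.mpr ⟨v, x, M.m u, hvx, hpv.symm, hpx.symm, rfl⟩
  have := Set.ncard_le_ncard hsub
  omega

end GMatching

theorem stmt10_general (V : Type) [Fintype V] (G : SimpleGraph V)
    (hdeg : ∀ v, {u | G.Adj v u}.ncard ≤ 2)
    (M : GMatching G) (hmax : ∀ M' : GMatching G, gsize M' ≤ gsize M)
    (v u w : V) (hv : M.m v = v)
    (hu : G.Adj v u) (hw : G.Adj v w) :
    M.m u ≠ u ∧ M.m w ≠ w ∧ ∀ x, G.Adj u x → x ≠ v → M.m x ≠ x := by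
  have hmax : M.IsMaximum := hmax
  have hmu : M.m u ≠ u := hmax.m_ne_self_of_adj hv hu
  refine ⟨hmu, hmax.m_ne_self_of_adj hv hw, fun x hux hxv hx => hxv ?_⟩
  exact (M.eq_of_adj_of_adj_of_m_eq_self (hdeg u) hmu hv hx hu.symm hux).symm

/-- In a graph of maximum degree at most 2, if M is a maximum-cardinality
matching and vertex v is unmatched with two (distinct) neighbours u and w, then
u and w are matched; moreover any other neighbour of u (besides v) is matched. -/
theorem stmt10 (V : Type) [Fintype V] (G : SimpleGraph V)
    (hdeg : ∀ v, {u | G.Adj v u}.ncard ≤ 2)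
    (M : GMatching G) (hmax : ∀ M' : GMatching G, gsize M' ≤ gsize M)
    (v u w : V) (hv : M.m v = v)
    (hu : G.Adj v u) (hw : G.Adj v w) (huw : u ≠ w) :
    M.m u ≠ u ∧ M.m w ≠ w ∧ ∀ x, G.Adj u x → x ≠ v → M.m x ≠ x :=
  stmt10_general V G hdeg M hmax v u w hv hu hw
end

section
/- In the 9-agent forcing gadget, if v is removed (matched externally to a preferred partner) and the remaining 8 agents are matched as {f1,f2}, {f3,f4}, {f5,f6}, {f7,f8}, then the blocking pairs among the 8 gadget agents are exactly {f4,f5} and {f6,f8}, so no gadget agent other than possibly v is in more than one blocking pair. -/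
/-- Preference lists of the forcing gadget with v removed (agent i is f_{i+1}). -/
def plist8 : Fin 8 → List (Fin 8) :=
  ![[1, 2, 3, 4, 5, 6, 7],
    [0, 2, 3, 4, 5, 6, 7],
    [3, 4, 5, 6, 7, 0, 1],
    [4, 2, 5, 6, 7, 0, 1],
    [2, 3, 5, 6, 7, 0, 1],
    [6, 7, 0, 1, 2, 3, 4],
    [7, 5, 0, 1, 2, 3, 4],
    [5, 6, 0, 1, 2, 3, 4]]

abbrev listPrefers {A : Type} [DecidableEq A] (l : List A) (b c : A) : Prop :=
  b ∈ l ∧ c ∈ l ∧ l.idxOf b < l.idxOf c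

theorem Matching.m_eq_of_m_eq_s15 {A : Type} {I : SRI A} (M : Matching I) {a b : A}
    (h : M.m a = b) : M.m b = a := by
  rw [← h, M.invol]

theorem blocks_iff_of_forall_ne {A : Type} [DecidableEq A] (I : SRI A) (plist : A → List A)
    (hacc : ∀ a b, I.acc a b ↔ a ≠ b)
    (hpref : ∀ a b c, I.pref a b c ↔ listPrefers (plist a) b c)
    (M : Matching I) (hM : ∀ a, M.m a ≠ a) (a b : A) :
    blocks I M a b ↔
      a ≠ b ∧ listPrefers (plist a) b (M.m a) ∧ listPrefers (plist b) a (M.m b) := by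
  simp only [blocks, hacc, hpref, hM, false_or]

theorem bpa_le_one_of_unique {A : Type} [Finite A] {I : SRI A} {M : Matching I} {a : A}
    (h : ∀ b c, blocks I M a b → blocks I M a c → b = c) : bpa I M a ≤ 1 :=
  (Set.ncard_le_one).2 fun b hb c hc => h b c hb hc

def gadgetPartner : Fin 8 → Fin 8 := ![1, 0, 3, 2, 5, 4, 7, 6]

theorem Matching.m_eq_gadgetPartner {I : SRI (Fin 8)} (M : Matching I)
    (h12 : M.m 0 = 1) (h34 : M.m 2 = 3) (h56 : M.m 4 = 5) (h78 : M.m 6 = 7) (a : Fin 8) :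
    M.m a = gadgetPartner a := by
  fin_cases a
  exacts [h12, M.m_eq_of_m_eq_s15 h12, h34, M.m_eq_of_m_eq_s15 h34, h56, M.m_eq_of_m_eq_s15 h56, h78,
    M.m_eq_of_m_eq_s15 h78]

theorem gadgetPartner_ne (a : Fin 8) : gadgetPartner a ≠ a := by
  revert a; decide

theorem gadget_mutual_preference_iff (a b : Fin 8) :
    (a ≠ b ∧ listPrefers (plist8 a) b (gadgetPartner a) ∧
        listPrefers (plist8 b) a (gadgetPartner b)) ↔
      ((a = 3 ∧ b = 4) ∨ (a = 4 ∧ b = 3) ∨ (a = 5 ∧ b = 7) ∨ (a = 7 ∧ b = 5)) := by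
  revert a b; decide

/-- If, after removing v, the gadget agents are matched as
{f1,f2}, {f3,f4}, {f5,f6}, {f7,f8}, then the blocking pairs are exactly
{f4,f5} and {f6,f8}, so no gadget agent is in more than one blocking pair. -/
theorem stmt15 (I : SRI (Fin 8))
    (hacc : ∀ a b, I.acc a b ↔ a ≠ b)
    (hpref : ∀ a b c, I.pref a b c ↔
      b ∈ plist8 a ∧ c ∈ plist8 a ∧ (plist8 a).idxOf b < (plist8 a).idxOf c)
    (M : Matching I)
    (h12 : M.m 0 = 1) (h34 : M.m 2 = 3) (h56 : M.m 4 = 5) (h78 : M.m 6 = 7) :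
    (∀ a b : Fin 8, blocks I M a b ↔
      ((a = 3 ∧ b = 4) ∨ (a = 4 ∧ b = 3) ∨ (a = 5 ∧ b = 7) ∨ (a = 7 ∧ b = 5))) ∧
    (∀ a, bpa I M a ≤ 1) := by
  have hM := M.m_eq_gadgetPartner h12 h34 h56 h78
  have hblocks : ∀ a b : Fin 8, blocks I M a b ↔
      ((a = 3 ∧ b = 4) ∨ (a = 4 ∧ b = 3) ∨ (a = 5 ∧ b = 7) ∨ (a = 7 ∧ b = 5)) := by
    intro a b
    rw [blocks_iff_of_forall_ne I plist8 hacc hpref M (fun a => hM a ▸ gadgetPartner_ne a),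
      hM, hM]
    exact gadget_mutual_preference_iff a b
  refine ⟨hblocks, fun a => bpa_le_one_of_unique fun b c hb hc => ?_⟩
  rw [hblocks] at hb hc
  omega
end

section
/- For any fixed ε ∈ (0,1) and all sufficiently large positive integers r, there exists a positive integer k with 0 ≤ k ≤ ⌈max{4/3, (48r)^{q/(1−q)}}⌉ where q = 1 − ε, such that N := 32r + 24r·k satisfies k = ⌊N^{q}⌋, i.e., k^{1/q} ≤ 32r + 24r·k < (k+1)^{1/q}. -/
/-!
With `q = 1 - ε`, `X = 32 r` and `Y = 24 r`, take `k` to be the largest natural number with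
`k ^ (1/q) ≤ X + Y k`. Such a `k` exists because `0` qualifies and every qualifying `m` is
at most `max (X / Y) ((2 Y) ^ (q / (1 - q)))`: once `m ≥ X / Y` we have `m ^ (1/q) ≤ 2 Y m`,
i.e. `m ^ ((1 - q) / q) ≤ 2 Y`. Maximality gives `X + Y k < (k + 1) ^ (1/q)`, and taking
`q`-th powers turns the two bounds into `k = ⌊(X + Y k) ^ q⌋₊`.
-/

open Real

lemma eq_floor_rpow_of_rpow_inv_le_of_lt {q N : ℝ} {k : ℕ} (hq : 0 < q) (hN : 0 ≤ N)
    (hlow : (k : ℝ) ^ (1 / q) ≤ N) (hup : N < ((k : ℝ) + 1) ^ (1 / q)) :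
    k = ⌊N ^ q⌋₊ := by
  rw [one_div] at hlow hup
  rw [eq_comm, Nat.floor_eq_iff (by positivity)]
  exact ⟨(rpow_inv_le_iff_of_pos k.cast_nonneg hN hq).1 hlow,
    (lt_rpow_inv_iff_of_pos hN (by positivity) hq).1 hup⟩

lemma le_rpow_of_rpow_le_mul_self {q x c : ℝ} (hq0 : 0 < q) (hq1 : q < 1) (hx : 0 < x)
    (h : x ^ (1 / q) ≤ c * x) : x ≤ c ^ (q / (1 - q)) := by
  have hs : 0 < 1 / q - 1 := by rw [sub_pos, lt_one_div one_pos hq0, div_one]; exact hq1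
  have hxs : x ^ (1 / q - 1) ≤ c := by
    rwa [rpow_sub_one hx.ne', div_le_iff₀ hx]
  have hinv : q / (1 - q) = (1 / q - 1)⁻¹ := by field_simp
  rw [hinv, le_rpow_inv_iff_of_pos hx.le ((rpow_nonneg hx.le _).trans hxs) hs]
  exact hxs

lemma le_max_of_rpow_le_add_mul {q x X Y : ℝ} (hq0 : 0 < q) (hq1 : q < 1) (hX : 0 ≤ X)
    (hY : 0 < Y) (h : x ^ (1 / q) ≤ X + Y * x) : x ≤ max (X / Y) ((2 * Y) ^ (q / (1 - q))) := by
  rcases le_or_gt x (X / Y) with hxXY | hXYx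
  · exact le_max_of_le_left hxXY
  · have hXY : X < Y * x := by rwa [div_lt_iff₀' hY] at hXYx
    have hx : 0 < x := (div_nonneg hX hY.le).trans_lt hXYx
    refine le_max_of_le_right (le_rpow_of_rpow_le_mul_self hq0 hq1 hx ?_)
    linarith

lemma Nat.exists_le_and_not_succ_of_bounded {P : ℕ → Prop} [DecidablePred P] {B : ℕ}
    (h0 : P 0) (hB : ∀ m, P m → m ≤ B) : ∃ k ≤ B, P k ∧ ¬ P (k + 1) := by
  have hk : P (Nat.findGreatest P (B + 1)) := Nat.findGreatest_spec (Nat.zero_le _) h0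
  have hkB := hB _ hk
  exact ⟨_, hkB, hk, Nat.findGreatest_is_greatest (Nat.lt_succ_self _) (by omega)⟩

lemma exists_nat_rpow_le_add_mul_lt {q X Y : ℝ} (hq0 : 0 < q) (hq1 : q < 1) (hX : 0 ≤ X)
    (hY : 0 < Y) :
    ∃ k : ℕ, k ≤ ⌈max (X / Y) ((2 * Y) ^ (q / (1 - q)))⌉₊ ∧
      (k : ℝ) ^ (1 / q) ≤ X + Y * k ∧ X + Y * k < ((k : ℝ) + 1) ^ (1 / q) := by
  classical
  obtain ⟨k, hkB, hk, hk1⟩ := Nat.exists_le_and_not_succ_of_bounded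
    (P := fun m : ℕ => (m : ℝ) ^ (1 / q) ≤ X + Y * m)
    (by rw [Nat.cast_zero, zero_rpow (one_div_pos.2 hq0).ne', mul_zero, add_zero]; exact hX)
    (fun m hm => Nat.cast_le.1 <|
      (le_max_of_rpow_le_add_mul hq0 hq1 hX hY hm).trans (Nat.le_ceil _))
  refine ⟨k, hkB, hk, ?_⟩
  push_cast [not_le] at hk1
  nlinarith

/-- Arithmetic existence lemma for the hardness construction: for any fixed
ε ∈ (0,1) and all sufficiently large r, there is k with
0 ≤ k ≤ ⌈max {4/3, (48r)^{q/(1-q)}}⌉ (where q = 1 - ε) such that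
N := 32r + 24r·k satisfies k = ⌊N^q⌋, i.e. k^{1/q} ≤ N < (k+1)^{1/q}. -/
theorem stmt19 (ε : ℝ) (hε0 : 0 < ε) (hε1 : ε < 1) :
    ∃ r0 : ℕ, ∀ r : ℕ, r0 ≤ r →
      ∃ k : ℕ,
        k ≤ ⌈max ((4 : ℝ) / 3) ((48 * (r : ℝ)) ^ ((1 - ε) / ε))⌉₊ ∧
        (let N : ℕ := 32 * r + 24 * r * k
         k = ⌊(N : ℝ) ^ (1 - ε)⌋₊ ∧
         (k : ℝ) ^ (1 / (1 - ε)) ≤ (N : ℝ) ∧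
         (N : ℝ) < ((k : ℝ) + 1) ^ (1 / (1 - ε))) := by
  refine ⟨1, fun r hr => ?_⟩
  have hr0 : (0 : ℝ) < r := by exact_mod_cast hr
  obtain ⟨k, hkB, hlow, hup⟩ := exists_nat_rpow_le_add_mul_lt (X := 32 * r) (Y := 24 * r)
    (sub_pos.2 hε1) (sub_lt_self 1 hε0) (by positivity) (by positivity)
  have hB : max (32 * (r : ℝ) / (24 * r)) ((2 * (24 * r)) ^ ((1 - ε) / (1 - (1 - ε)))) =
      max (4 / 3) ((48 * (r : ℝ)) ^ ((1 - ε) / ε)) := by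
    congr 1
    · field_simp; norm_num
    · rw [sub_sub_cancel, ← mul_assoc]; norm_num
  have hN : ((32 * r + 24 * r * k : ℕ) : ℝ) = 32 * r + 24 * r * k := by push_cast; rfl
  refine ⟨k, hB ▸ hkB, ?_⟩
  rw [← hN] at hlow hup
  exact ⟨eq_floor_rpow_of_rpow_inv_le_of_lt (sub_pos.2 hε1) (Nat.cast_nonneg _) hlow hup,
    hlow, hup⟩
end
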